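/- Let N be a nonempty finite set and let f : 2^N → ℝ ∪ {-∞} be a set function whose effective domain dom f is nonempty and consists of equi-cardinal sets (|X| = |Y| for all X, Y ∈ dom f). If the conjugate function g(p) = max{ f(X) − p(X) : X ⊆ N } is submodular on ℝ^N, then dom f is connected, i.e., for any distinct X, Y ∈ dom f there exist i ∈ X \ Y and j ∈ Y \ X such that Y + i − j ∈ dom f. -/

import Mathlib

open Finset

/-! Let `B = dom f`, all of whose members have `r` elements, and `ρ(S) = max_{Z ∈ B} |Z ∩ S|`.
For the test vector `p_S = M (1 - 2·𝟙_S)` one has `f(Z) - p_S(Z) = f(Z) + M (2|Z ∩ S| - r)`, so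
`g(p_S) = M (2ρ(S) - r)` up to an error bounded by the spread of `f` on `B`. Since
`p_S ∨ p_T = p_{S ∩ T}` and `p_S ∧ p_T = p_{S ∪ T}`, submodularity of `g` forces the integer valued
`ρ` to be submodular once `M` exceeds that spread.

A submodular `ρ` gives the exchange: pick `j ∈ Y \ X` and put `S = Y - j`, so `ρ(S) = r - 1`. If no
`Y + i - j` with `i ∈ X \ Y` lay in `B`, no `i ∈ X` would raise the rank of `S`, hence by
submodularity neither would all of `X` together; but `ρ(X) = r`. -/

def IsSubmodular {L β : Type*} [Lattice L] [Add β] [LE β] (μ : L → β) : Prop :=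
  ∀ a b, μ (a ⊔ b) + μ (a ⊓ b) ≤ μ a + μ b

section BasisRank

variable {α : Type*} [DecidableEq α]

theorem le_of_forall_insert_le_of_isSubmodular {β : Type*} [AddCommMonoid β] [PartialOrder β]
    [IsOrderedCancelAddMonoid β] {μ : Finset α → β} (hmono : Monotone μ) (hsub : IsSubmodular μ)
    {S T : Finset α} (h : ∀ i ∈ T, μ (insert i S) ≤ μ S) : μ (S ∪ T) ≤ μ S := by
  induction T using Finset.induction_on with
  | empty => simp
  | insert a T _ ih =>
    rw [forall_mem_insert] at h
    have hunion : (S ∪ T) ∪ insert a S = S ∪ insert a T := by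
      rw [union_insert, union_insert, union_eq_left.mpr subset_union_left]
    have hinter : μ S ≤ μ ((S ∪ T) ∩ insert a S) :=
      hmono (subset_inter subset_union_left (subset_insert a S))
    refine le_of_add_le_add_right (a := μ S) ?_
    calc μ (S ∪ insert a T) + μ S
        ≤ μ ((S ∪ T) ∪ insert a S) + μ ((S ∪ T) ∩ insert a S) := by
          rw [hunion]; exact add_le_add_right hinter _
      _ ≤ μ (S ∪ T) + μ (insert a S) := hsub _ _
      _ ≤ μ S + μ S := add_le_add (ih h.2) h.1

/-- For the bases `B` of a matroid this is its rank function. -/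
def basisRank (B : Finset (Finset α)) (S : Finset α) : ℕ :=
  B.sup fun Z => #(Z ∩ S)

variable {B : Finset (Finset α)} {S Z : Finset α} {r : ℕ}

theorem card_inter_le_basisRank (hZ : Z ∈ B) : #(Z ∩ S) ≤ basisRank B S :=
  le_sup (f := fun Z => #(Z ∩ S)) hZ

theorem basisRank_mono : Monotone (basisRank B) := fun _ _ hST =>
  Finset.sup_le fun _ hZ =>
    (card_le_card (inter_subset_inter_left hST)).trans (card_inter_le_basisRank hZ)

theorem basisRank_le_card (B : Finset (Finset α)) (S : Finset α) : basisRank B S ≤ #S :=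
  Finset.sup_le fun _ _ => card_le_card inter_subset_right

theorem basisRank_le (hB : ∀ Z ∈ B, #Z = r) (S : Finset α) : basisRank B S ≤ r :=
  Finset.sup_le fun Z hZ => (card_le_card inter_subset_left).trans (hB Z hZ).le

theorem basisRank_eq_card_of_subset (hZ : Z ∈ B) (hSZ : S ⊆ Z) : basisRank B S = #S := by
  refine (basisRank_le_card B S).antisymm ?_
  simpa [inter_eq_right.mpr hSZ] using card_inter_le_basisRank (S := S) hZ

theorem mem_of_basisRank_eq (hB : ∀ Z ∈ B, #Z = r) (hne : B.Nonempty) (hS : #S = r)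
    (h : basisRank B S = r) : S ∈ B := by
  obtain ⟨Z, hZ, hZS⟩ := exists_mem_eq_sup B hne fun Z => #(Z ∩ S)
  have hsub : Z ⊆ S := inter_eq_left.mp <|
    eq_of_subset_of_card_le inter_subset_left (by rw [hB Z hZ, ← h]; exact hZS.le)
  rwa [← eq_of_subset_of_card_le hsub (by rw [hS, hB Z hZ])]

theorem exists_insert_erase_mem_of_isSubmodular_basisRank (hB : ∀ Z ∈ B, #Z = r)
    (hsub : IsSubmodular (basisRank B)) {X Y : Finset α} (hX : X ∈ B) (hY : Y ∈ B) {j : α}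
    (hj : j ∈ Y \ X) : ∃ i ∈ X \ Y, (insert i Y).erase j ∈ B := by
  by_contra! hnot
  obtain ⟨hjY, hjX⟩ := mem_sdiff.mp hj
  set S := Y.erase j
  have hS : #S + 1 = r := by rw [card_erase_add_one hjY, hB Y hY]
  have hrankS : basisRank B S = #S := basisRank_eq_card_of_subset hY (erase_subset j Y)
  have hins : ∀ i ∈ X, basisRank B (insert i S) ≤ basisRank B S := by
    intro i hiX
    have hij : i ≠ j := ne_of_mem_of_not_mem hiX hjX
    by_cases hiY : i ∈ Y
    · rw [insert_eq_of_mem (mem_erase.mpr ⟨hij, hiY⟩)]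
    · have hcard : #(insert i S) = r := by
        rw [card_insert_of_notMem fun h => hiY (mem_of_mem_erase h), hS]
      have hnmem : insert i S ∉ B := by
        rw [← erase_insert_of_ne hij]; exact hnot i (mem_sdiff.mpr ⟨hiX, hiY⟩)
      have hne : basisRank B (insert i S) ≠ r := fun h =>
        hnmem (mem_of_basisRank_eq hB ⟨X, hX⟩ hcard h)
      have := basisRank_le hB (insert i S)
      omega
  have hup := le_of_forall_insert_le_of_isSubmodular basisRank_mono hsub hins
  have hX' : basisRank B X ≤ basisRank B (S ∪ X) := basisRank_mono subset_union_right
  rw [basisRank_eq_card_of_subset hX subset_rfl, hB X hX] at hX'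
  omega

end BasisRank

section SignVec

variable {N : Type*} [DecidableEq N]

def signVec (M : ℝ) (S : Finset N) : N → ℝ := fun i => if i ∈ S then -M else M

variable {M : ℝ} {S T Z : Finset N}

theorem signVec_sup (hM : 0 ≤ M) : signVec M S ⊔ signVec M T = signVec M (S ∩ T) := by
  ext i
  by_cases hS : i ∈ S <;> by_cases hT : i ∈ T <;> simp [signVec, hS, hT, hM]

theorem signVec_inf (hM : 0 ≤ M) : signVec M S ⊓ signVec M T = signVec M (S ∪ T) := by
  ext i
  by_cases hS : i ∈ S <;> by_cases hT : i ∈ T <;> simp [signVec, hS, hT, hM]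

theorem sum_signVec : ∑ i ∈ Z, signVec M S i = M * (#Z - 2 * #(Z ∩ S)) := by
  rw [← card_filter_add_card_filter_not (s := Z) (· ∈ S)]
  simp only [signVec, sum_ite, sum_const, filter_mem_eq_inter, nsmul_eq_mul]
  push_cast
  ring

end SignVec

theorem exists_forall_coe_eq_mem_Icc {ι : Type*} [Finite ι] (f : ι → WithBot ℝ) :
    ∃ lo hi : ℝ, ∀ i (a : ℝ), f i = a → a ∈ Set.Icc lo hi := by
  obtain ⟨lo, hlo⟩ := (Set.finite_range fun i => (f i).unbotD 0).bddBelow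
  obtain ⟨hi, hhi⟩ := (Set.finite_range fun i => (f i).unbotD 0).bddAbove
  refine ⟨lo, hi, fun i a ha => ?_⟩
  have : (f i).unbotD 0 = a := by rw [ha]; rfl
  exact ⟨this ▸ hlo ⟨i, rfl⟩, this ▸ hhi ⟨i, rfl⟩⟩

section Conjugate

variable {N : Type*} [Fintype N] {Z : Finset N}

noncomputable def effDom (f : Finset N → WithBot ℝ) : Finset (Finset N) :=
  univ.filter fun X => f X ≠ ⊥

theorem mem_effDom {f : Finset N → WithBot ℝ} : Z ∈ effDom f ↔ f Z ≠ ⊥ := by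
  simp [effDom]

def IsConjugate (f : Finset N → WithBot ℝ) (g : (N → ℝ) → ℝ) : Prop :=
  ∀ p : N → ℝ, (g p : WithBot ℝ) =
    (univ : Finset (Finset N)).sup fun X => f X + ((-(∑ i ∈ X, p i) : ℝ) : WithBot ℝ)

variable {f : Finset N → WithBot ℝ} {g : (N → ℝ) → ℝ}

theorem IsConjugate.sub_le (hg : IsConjugate f g) (p : N → ℝ) {a : ℝ} (ha : f Z = a) :
    a - ∑ i ∈ Z, p i ≤ g p := by
  have := le_sup (f := fun X => f X + ((-(∑ i ∈ X, p i) : ℝ) : WithBot ℝ)) (mem_univ Z)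
  rw [← hg p, ha, ← WithBot.coe_add, WithBot.coe_le_coe] at this
  linarith

theorem IsConjugate.le_of_forall_sub_le (hg : IsConjugate f g) {p : N → ℝ} {c : ℝ}
    (h : ∀ Z (a : ℝ), f Z = a → a - ∑ i ∈ Z, p i ≤ c) : g p ≤ c := by
  have : (g p : WithBot ℝ) ≤ c := by
    rw [hg p]
    refine Finset.sup_le fun Z _ => ?_
    by_cases hZ : f Z = ⊥
    · simp [hZ]
    obtain ⟨a, ha⟩ := WithBot.ne_bot_iff_exists.mp hZ
    rw [← ha, ← WithBot.coe_add, WithBot.coe_le_coe]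
    linarith [h Z a ha.symm]
  exact_mod_cast this

variable [DecidableEq N] {r : ℕ} {lo hi : ℝ}

theorem IsConjugate.le_apply_signVec (hg : IsConjugate f g) (hB : ∀ Z ∈ effDom f, #Z = r)
    (hne : (effDom f).Nonempty) (hlo : ∀ Z (a : ℝ), f Z = a → lo ≤ a) (M : ℝ) (S : Finset N) :
    lo + M * (2 * basisRank (effDom f) S - r) ≤ g (signVec M S) := by
  obtain ⟨Z, hZ, hZS⟩ := exists_mem_eq_sup _ hne fun Z => #(Z ∩ S)
  obtain ⟨a, ha⟩ := WithBot.ne_bot_iff_exists.mp (mem_effDom.mp hZ)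
  have hrank : basisRank (effDom f) S = #(Z ∩ S) := hZS
  have := hg.sub_le (signVec M S) ha.symm
  rw [sum_signVec, hB Z hZ] at this
  rw [hrank]
  linarith [hlo Z a ha.symm]

theorem IsConjugate.apply_signVec_le (hg : IsConjugate f g) (hB : ∀ Z ∈ effDom f, #Z = r)
    (hhi : ∀ Z (a : ℝ), f Z = a → a ≤ hi) {M : ℝ} (hM : 0 ≤ M) (S : Finset N) :
    g (signVec M S) ≤ hi + M * (2 * basisRank (effDom f) S - r) := by
  refine hg.le_of_forall_sub_le fun Z a ha => ?_
  have hZ : Z ∈ effDom f := mem_effDom.mpr (ha ▸ WithBot.coe_ne_bot)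
  have hk : (#(Z ∩ S) : ℝ) ≤ basisRank (effDom f) S := by
    exact_mod_cast card_inter_le_basisRank hZ
  rw [sum_signVec, hB Z hZ]
  nlinarith [hhi Z a ha, mul_le_mul_of_nonneg_left hk hM]

theorem IsConjugate.isSubmodular_basisRank (hg : IsConjugate f g) (hsub : IsSubmodular g)
    (hB : ∀ Z ∈ effDom f, #Z = r) (hne : (effDom f).Nonempty) :
    IsSubmodular (basisRank (effDom f)) := by
  obtain ⟨lo, hi, hbd⟩ := exists_forall_coe_eq_mem_Icc f
  set M := |hi - lo| + 1
  have hM : 0 < M := by positivity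
  have hspread : hi - lo < M := by linarith [le_abs_self (hi - lo)]
  intro S T
  set μ := basisRank (effDom f)
  show μ (S ∪ T) + μ (S ∩ T) ≤ μ S + μ T
  have hg_ST := hsub (signVec M S) (signVec M T)
  rw [signVec_sup hM.le, signVec_inf hM.le] at hg_ST
  have hlo : ∀ Z (a : ℝ), f Z = a → lo ≤ a := fun Z a ha => (hbd Z a ha).1
  have hhi : ∀ Z (a : ℝ), f Z = a → a ≤ hi := fun Z a ha => (hbd Z a ha).2
  have h₁ := hg.le_apply_signVec hB hne hlo M (S ∩ T)
  have h₂ := hg.le_apply_signVec hB hne hlo M (S ∪ T)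
  have h₃ := hg.apply_signVec_le hB hhi hM.le S
  have h₄ := hg.apply_signVec_le hB hhi hM.le T
  have key : M * ((μ (S ∪ T) + μ (S ∩ T) : ℕ) : ℝ) < M * ((μ S + μ T : ℕ) + 1) := by
    push_cast; linarith
  exact Nat.lt_succ_iff.mp (by exact_mod_cast lt_of_mul_lt_mul_left key hM.le)

end Conjugate

theorem dom_connected_of_conjugate_submodular_general
    {N : Type*} [Fintype N] [DecidableEq N]
    (f : Finset N → WithBot ℝ)
    (hequi : ∀ X Y : Finset N, f X ≠ ⊥ → f Y ≠ ⊥ → X.card = Y.card)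
    (g : (N → ℝ) → ℝ)
    (hg : ∀ p : N → ℝ,
      (g p : WithBot ℝ) =
        (Finset.univ : Finset (Finset N)).sup
          (fun X => f X + ((-(∑ i ∈ X, p i) : ℝ) : WithBot ℝ)))
    (hsub : ∀ p q : N → ℝ, g (p ⊔ q) + g (p ⊓ q) ≤ g p + g q) :
    ∀ X Y : Finset N, f X ≠ ⊥ → f Y ≠ ⊥ → X ≠ Y →
      ∃ i ∈ X \ Y, ∃ j ∈ Y \ X, f ((insert i Y).erase j) ≠ ⊥ := by
  intro X Y hX hY hXY
  have hcard : ∀ Z ∈ effDom f, #Z = #X := fun Z hZ => hequi Z X (mem_effDom.mp hZ) hX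
  have hrank : IsSubmodular (basisRank (effDom f)) :=
    IsConjugate.isSubmodular_basisRank hg hsub hcard ⟨X, mem_effDom.mpr hX⟩
  obtain ⟨j, hj⟩ : (Y \ X).Nonempty := sdiff_nonempty.mpr fun hYX =>
    hXY (eq_of_subset_of_card_le hYX (hequi X Y hX hY).le).symm
  obtain ⟨i, hi, hmem⟩ := exists_insert_erase_mem_of_isSubmodular_basisRank hcard hrank
    (mem_effDom.mpr hX) (mem_effDom.mpr hY) hj
  exact ⟨i, hi, j, hj, mem_effDom.mp hmem⟩

/-- If `dom f` is a nonempty family of equi-cardinal sets and the conjugate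
`g(p) = max { f(X) - p(X) : X ⊆ N }` is submodular, then `dom f` is connected:
for any distinct `X, Y ∈ dom f` there are `i ∈ X \ Y` and `j ∈ Y \ X` with
`Y + i - j ∈ dom f`. -/
theorem dom_connected_of_conjugate_submodular
    {N : Type*} [Fintype N] [DecidableEq N] [Nonempty N]
    (f : Finset N → WithBot ℝ) (hdom : ∃ X : Finset N, f X ≠ ⊥)
    (hequi : ∀ X Y : Finset N, f X ≠ ⊥ → f Y ≠ ⊥ → X.card = Y.card)
    (g : (N → ℝ) → ℝ)
    (hg : ∀ p : N → ℝ,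
      (g p : WithBot ℝ) =
        (Finset.univ : Finset (Finset N)).sup
          (fun X => f X + ((-(∑ i ∈ X, p i) : ℝ) : WithBot ℝ)))
    (hsub : ∀ p q : N → ℝ, g (p ⊔ q) + g (p ⊓ q) ≤ g p + g q) :
    ∀ X Y : Finset N, f X ≠ ⊥ → f Y ≠ ⊥ → X ≠ Y →
      ∃ i ∈ X \ Y, ∃ j ∈ Y \ X, f ((insert i Y).erase j) ≠ ⊥ :=
  dom_connected_of_conjugate_submodular_general f hequi g hg hsub
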